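/- Let μ, C, S, c be real numbers with K := C² + S² − μ² > 0 and μ ≠ S, and let α(t) = 2·arctan( (C − √K · tanh(√K·(t + c)/2)) / (μ − S) ). Then α(t) converges as t → ∞ to α∞ := 2·arctan( (C − √K)/(μ − S) ), and the limit is a fixed point: μ + S·cos α∞ − C·sin α∞ = 0. More generally, for each ε ∈ {−1, +1} the value 2·arctan( (C + ε·√K)/(μ − S) ) satisfies μ + S·cos α − C·sin α = 0. -/

import Mathlib

/-!
Since `tanh x → 1`, the argument of the arctangent tends to `(C - √K)/(μ - S)`. With
`u = tan (α/2)` the phase velocity equals `((μ - S) u² - 2 C u + (μ + S)) / (1 + u²)`, and the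
quadratic in the numerator has discriminant `4K`, so its roots are `(C ± √K)/(μ - S)`.
-/

open Real Filter Topology

theorem Real.tanh_eq_one_sub_exp_div (x : ℝ) :
    tanh x = (1 - exp (-(2 * x))) / (1 + exp (-(2 * x))) := by
  have hexp : exp (-(2 * x)) = exp (-x) / exp x := by
    rw [← exp_sub]; ring_nf
  rw [tanh_eq, hexp]
  field_simp

theorem Real.tendsto_tanh_atTop : Tendsto tanh atTop (𝓝 1) := by
  have hexp : Tendsto (fun x : ℝ => exp (-(2 * x))) atTop (𝓝 0) :=
    tendsto_exp_neg_atTop_nhds_zero.comp (tendsto_id.const_mul_atTop two_pos)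
  have h : Tendsto (fun x => (1 - exp (-(2 * x))) / (1 + exp (-(2 * x)))) atTop
      (𝓝 ((1 - 0) / (1 + 0))) :=
    (tendsto_const_nhds.sub hexp).div (tendsto_const_nhds.add hexp) (by norm_num)
  rw [funext tanh_eq_one_sub_exp_div]
  simpa using h

theorem Real.cos_two_mul_arctan (u : ℝ) : cos (2 * arctan u) = (1 - u ^ 2) / (1 + u ^ 2) := by
  rw [cos_two_mul, cos_sq_arctan]
  field_simp
  ring

theorem Real.sin_two_mul_arctan (u : ℝ) : sin (2 * arctan u) = 2 * u / (1 + u ^ 2) := by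
  rw [sin_two_mul, ← tan_mul_cos (cos_arctan_pos u).ne', tan_arctan, mul_assoc, mul_assoc, ← sq,
    cos_sq_arctan]
  ring

noncomputable def phaseVelocity (μ C S α : ℝ) : ℝ := μ + S * cos α - C * sin α

theorem phaseVelocity_two_mul_arctan (μ C S u : ℝ) :
    phaseVelocity μ C S (2 * arctan u) =
      ((μ - S) * u ^ 2 - 2 * C * u + (μ + S)) / (1 + u ^ 2) := by
  rw [phaseVelocity, cos_two_mul_arctan, sin_two_mul_arctan]
  field_simp
  ring

theorem phaseVelocity_two_mul_arctan_eq_zero {μ C S r : ℝ} (hμS : μ ≠ S)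
    (hr : r ^ 2 = C ^ 2 + S ^ 2 - μ ^ 2) :
    phaseVelocity μ C S (2 * arctan ((C + r) / (μ - S))) = 0 := by
  have hμS' : μ - S ≠ 0 := sub_ne_zero.mpr hμS
  rw [phaseVelocity_two_mul_arctan, div_eq_zero_iff]
  left
  field_simp
  linear_combination hr

theorem tendsto_tanh_mul_add_div_two {a : ℝ} (ha : 0 < a) (c : ℝ) :
    Tendsto (fun t => tanh (a * (t + c) / 2)) atTop (𝓝 1) :=
  tendsto_tanh_atTop.comp
    (((tendsto_atTop_add_const_right _ c tendsto_id).const_mul_atTop ha).atTop_div_const two_pos)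

/-- If K := C² + S² − μ² > 0, μ ≠ S and
α(t) = 2·arctan((C − √K·tanh(√K·(t+c)/2))/(μ − S)), then α(t) → α∞ :=
2·arctan((C − √K)/(μ − S)) as t → ∞, the limit is a fixed point
(μ + S·cos α∞ − C·sin α∞ = 0), and more generally for each ε ∈ {−1,+1} the
value 2·arctan((C + ε√K)/(μ − S)) satisfies μ + S·cos α − C·sin α = 0. -/
theorem tanh_solution_limit_fixed_point (μ C S c : ℝ)
    (hK : 0 < C ^ 2 + S ^ 2 - μ ^ 2) (hμS : μ ≠ S)
    (α : ℝ → ℝ)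
    (hα : ∀ t, α t = 2 * Real.arctan
      ((C - Real.sqrt (C ^ 2 + S ^ 2 - μ ^ 2) *
        Real.tanh (Real.sqrt (C ^ 2 + S ^ 2 - μ ^ 2) * (t + c) / 2)) / (μ - S))) :
    Filter.Tendsto α Filter.atTop
      (nhds (2 * Real.arctan ((C - Real.sqrt (C ^ 2 + S ^ 2 - μ ^ 2)) / (μ - S)))) ∧
    (μ + S * Real.cos (2 * Real.arctan ((C - Real.sqrt (C ^ 2 + S ^ 2 - μ ^ 2)) / (μ - S)))
       - C * Real.sin (2 * Real.arctan ((C - Real.sqrt (C ^ 2 + S ^ 2 - μ ^ 2)) / (μ - S)))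
      = 0) ∧
    (∀ ε : ℝ, ε = -1 ∨ ε = 1 →
      μ + S * Real.cos (2 * Real.arctan ((C + ε * Real.sqrt (C ^ 2 + S ^ 2 - μ ^ 2)) / (μ - S)))
        - C * Real.sin (2 * Real.arctan ((C + ε * Real.sqrt (C ^ 2 + S ^ 2 - μ ^ 2)) / (μ - S)))
      = 0) := by
  set K := C ^ 2 + S ^ 2 - μ ^ 2
  have hroots : ∀ ε : ℝ, ε = -1 ∨ ε = 1 →
      phaseVelocity μ C S (2 * arctan ((C + ε * √K) / (μ - S))) = 0 := by
    rintro ε hε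
    apply phaseVelocity_two_mul_arctan_eq_zero hμS
    have hε2 : ε ^ 2 = 1 := by rcases hε with rfl | rfl <;> norm_num
    rw [mul_pow, hε2, one_mul, sq_sqrt hK.le]
  have hlower := hroots (-1) (Or.inl rfl)
  rw [neg_one_mul, ← sub_eq_add_neg] at hlower
  refine ⟨?_, hlower, hroots⟩
  have hlim := ((continuous_arctan.tendsto _).comp
    (((tendsto_tanh_mul_add_div_two (sqrt_pos.mpr hK) c).const_mul √K).const_sub C
      |>.div_const (μ - S))).const_mul 2
  rw [funext hα]
  simpa using hlim
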